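/- arXiv:1502.06667 — 6 statements merged into one kernel-verified Lean document; each statement's English description precedes it below -/
import Mathlib

section
/- For every player n, every channel-selection profile a, and every alternative channel a'_n ∈ {1,…,M}, the change in player n's utility caused by unilaterally switching from a_n to a'_n has the same strict sign as the change in the potential function: u_n(a'_n, a_{−n}) − u_n(a) > 0 if and only if Φ(a'_n, a_{−n}) − Φ(a) > 0. (That is, Φ is an ordinal potential for the spectrum access graphical game.) -/
open Finset

/-- Number of neighbors of player `n` choosing the same channel as `n`. -/
def cCount {N M : ℕ} (G : SimpleGraph (Fin N)) [DecidableRel G.Adj]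
    (a : Fin N → Fin M) (n : Fin N) : ℕ :=
  (Finset.univ.filter (fun k => G.Adj n k ∧ a k = a n)).card

lemma cCount_eq_sum {N M : ℕ} (G : SimpleGraph (Fin N)) [DecidableRel G.Adj]
    (b : Fin N → Fin M) (k : Fin N) :
    (cCount G b k : ℤ) = ∑ j : Fin N, if G.Adj k j ∧ b j = b k then 1 else 0 := by
  rw [cCount, Finset.card_filter]
  push_cast
  rfl

lemma sum_cCount_update {N M : ℕ} (G : SimpleGraph (Fin N)) [DecidableRel G.Adj]
    (n : Fin N) (a : Fin N → Fin M) (a' : Fin M) :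
    ∑ k : Fin N, (cCount G (Function.update a n a') k : ℤ)
      - ∑ k : Fin N, (cCount G a k : ℤ)
      = 2 * ((cCount G (Function.update a n a') n : ℤ) - (cCount G a n : ℤ)) := by
  set b := Function.update a n a' with hb
  have hbn : ∀ j, j ≠ n → b j = a j := fun j hj => Function.update_of_ne hj _ _
  rw [← Finset.sum_sub_distrib, ← Finset.add_sum_erase _ _ (Finset.mem_univ n)]
  have hrest : ∑ k ∈ Finset.univ.erase n, ((cCount G b k : ℤ) - (cCount G a k : ℤ))
      = (cCount G b n : ℤ) - (cCount G a n : ℤ) := by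
    have hterm : ∀ k ∈ Finset.univ.erase n,
        (cCount G b k : ℤ) - (cCount G a k : ℤ)
          = (if G.Adj k n ∧ b n = b k then (1:ℤ) else 0)
            - (if G.Adj k n ∧ a n = a k then (1:ℤ) else 0) := by
      intro k hk
      have hkn : k ≠ n := Finset.ne_of_mem_erase hk
      rw [cCount_eq_sum, cCount_eq_sum,
        ← Finset.add_sum_erase _ _ (Finset.mem_univ n),
        ← Finset.add_sum_erase _ (fun j => if G.Adj k j ∧ a j = a k then (1:ℤ) else 0)
          (Finset.mem_univ n)]
      rw [hbn k hkn]
      have : ∑ j ∈ Finset.univ.erase n, (if G.Adj k j ∧ b j = a k then (1:ℤ) else 0)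
          = ∑ j ∈ Finset.univ.erase n, (if G.Adj k j ∧ a j = a k then (1:ℤ) else 0) := by
        refine Finset.sum_congr rfl fun j hj => ?_
        rw [hbn j (Finset.ne_of_mem_erase hj)]
      rw [this]
      ring
    rw [Finset.sum_congr rfl hterm, Finset.sum_sub_distrib]
    have h1 : ∑ k ∈ Finset.univ.erase n, (if G.Adj k n ∧ b n = b k then (1:ℤ) else 0)
        = (cCount G b n : ℤ) := by
      rw [cCount_eq_sum, ← Finset.add_sum_erase _ _ (Finset.mem_univ n)]
      simp only [SimpleGraph.irrefl, false_and, if_neg, not_false_iff, zero_add]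
      refine Finset.sum_congr rfl fun j hj => ?_
      congr 1
      rw [eq_iff_iff]
      exact ⟨fun ⟨h, e⟩ => ⟨h.symm, e.symm⟩, fun ⟨h, e⟩ => ⟨h.symm, e.symm⟩⟩
    have h2 : ∑ k ∈ Finset.univ.erase n, (if G.Adj k n ∧ a n = a k then (1:ℤ) else 0)
        = (cCount G a n : ℤ) := by
      rw [cCount_eq_sum, ← Finset.add_sum_erase _ _ (Finset.mem_univ n)]
      simp only [SimpleGraph.irrefl, false_and, if_neg, not_false_iff, zero_add]
      refine Finset.sum_congr rfl fun j hj => ?_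
      congr 1
      rw [eq_iff_iff]
      exact ⟨fun ⟨h, e⟩ => ⟨h.symm, e.symm⟩, fun ⟨h, e⟩ => ⟨h.symm, e.symm⟩⟩
    rw [h1, h2]
  rw [hrest]
  ring

/-- Utility of player `n`: expected rate divided by `1 + cCount`. -/
noncomputable def utility {N M : ℕ} (G : SimpleGraph (Fin N)) [DecidableRel G.Adj]
    (sbar : ℝ) (a : Fin N → Fin M) (n : Fin N) : ℝ :=
  sbar / (1 + (cCount G a n : ℝ))

/-- Potential function: negative aggregate same-channel-neighbor count. -/
def potential {N M : ℕ} (G : SimpleGraph (Fin N)) [DecidableRel G.Adj]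
    (a : Fin N → Fin M) : ℤ :=
  - ∑ n : Fin N, (cCount G a n : ℤ)

/-- Φ is an ordinal potential: for every player, profile and
alternative channel, the utility change of a unilateral switch is strictly
positive iff the potential change is strictly positive. -/
theorem ordinal_potential {N M : ℕ} (G : SimpleGraph (Fin N)) [DecidableRel G.Adj]
    (sbar : ℝ) (hs : 0 < sbar)
    (n : Fin N) (a : Fin N → Fin M) (a' : Fin M) :
    utility G sbar (Function.update a n a') n - utility G sbar a n > 0 ↔
      (potential G (Function.update a n a') : ℝ) - (potential G a : ℝ) > 0 := by
  have key := sum_cCount_update G n a a'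
  have hpotZ : potential G (Function.update a n a') - potential G a
      = 2 * ((cCount G a n : ℤ) - (cCount G (Function.update a n a') n : ℤ)) := by
    unfold potential; linarith [key]
  have hpot : (potential G (Function.update a n a') : ℝ) - (potential G a : ℝ)
      = 2 * ((cCount G a n : ℝ) - (cCount G (Function.update a n a') n : ℝ)) := by
    have h := congrArg (fun z : ℤ => (z : ℝ)) hpotZ
    push_cast at h
    linarith
  rw [hpot]
  unfold utility
  have h1 : (0:ℝ) < 1 + (cCount G (Function.update a n a') n : ℝ) := by positivity
  have h2 : (0:ℝ) < 1 + (cCount G a n : ℝ) := by positivity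
  rw [gt_iff_lt, sub_pos, div_lt_div_iff_of_pos_left hs h2 h1]
  constructor <;> intro h <;> [linarith; linarith]
end

section
/- The spectrum access graphical game has at least one pure strategy Nash equilibrium: there exists a channel-selection profile a* such that u_n(a*) ≥ u_n(a_n, a*_{−n}) for every player n and every channel a_n ∈ {1,…,M}. -/
open Finset

section aux
variable {N M : ℕ} (G : SimpleGraph (Fin N)) [DecidableRel G.Adj]

/-- Indicator of an ordered monochromatic adjacent pair. -/
def hfun (a : Fin N → Fin M) (k j : Fin N) : ℤ :=
  if G.Adj k j ∧ a j = a k then 1 else 0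

lemma hfun_symm (a : Fin N → Fin M) (k j : Fin N) : hfun G a k j = hfun G a j k := by
  unfold hfun
  congr 1
  simp only [eq_iff_iff]
  constructor <;> rintro ⟨h1, h2⟩ <;> exact ⟨h1.symm, h2.symm⟩

lemma hfun_self (a : Fin N → Fin M) (n : Fin N) : hfun G a n n = 0 :=
  if_neg (fun h => G.loopless.irrefl n h.1)

lemma cCount_eq (a : Fin N → Fin M) (n : Fin N) :
    (cCount G a n : ℤ) = ∑ j, hfun G a n j := by
  unfold cCount hfun
  rw [Finset.card_filter]
  push_cast
  rfl

lemma T_diff (a : Fin N → Fin M) (n : Fin N) (b : Fin M) :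
    (∑ k, (cCount G (Function.update a n b) k : ℤ)) - (∑ k, (cCount G a k : ℤ))
      = 2 * ((cCount G (Function.update a n b) n : ℤ) - (cCount G a n : ℤ)) := by
  set a' := Function.update a n b with ha'
  have hk : ∀ k, k ≠ n → a' k = a k := fun k hk => Function.update_of_ne hk _ _
  have key : ∀ k, k ≠ n → ∀ j, j ≠ n → hfun G a' k j = hfun G a k j := by
    intro k hkn j hjn
    unfold hfun
    rw [hk k hkn, hk j hjn]
  have e1 : ∀ (c : Fin N → Fin M) (k : Fin N), k ≠ n →
      ∑ j, (hfun G c k j) = hfun G c k n + ∑ j ∈ univ.erase n, hfun G c k j :=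
    fun c k _ => (Finset.add_sum_erase _ _ (mem_univ n)).symm
  have e2 : ∀ k, k ≠ n → ∑ j, (hfun G a' k j - hfun G a k j)
      = hfun G a' k n - hfun G a k n := by
    intro k hkn
    rw [Finset.sum_sub_distrib, e1 a' k hkn, e1 a k hkn]
    have : ∑ j ∈ univ.erase n, hfun G a' k j = ∑ j ∈ univ.erase n, hfun G a k j :=
      Finset.sum_congr rfl (fun j hj => key k hkn j (Finset.mem_erase.1 hj).1)
    rw [this]; ring
  have diffsum : ∀ c : Fin N → Fin M,
      ∑ j ∈ univ.erase n, hfun G c n j = (cCount G c n : ℤ) := by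
    intro c
    rw [cCount_eq, ← Finset.add_sum_erase _ _ (mem_univ n), hfun_self, zero_add]
  calc (∑ k, (cCount G a' k : ℤ)) - (∑ k, (cCount G a k : ℤ))
      = ∑ k, (∑ j, (hfun G a' k j - hfun G a k j)) := by
        rw [← Finset.sum_sub_distrib]
        exact Finset.sum_congr rfl (fun k _ => by
          rw [cCount_eq, cCount_eq, Finset.sum_sub_distrib])
    _ = (∑ j, (hfun G a' n j - hfun G a n j))
        + ∑ k ∈ univ.erase n, (∑ j, (hfun G a' k j - hfun G a k j)) :=
        (Finset.add_sum_erase _ _ (mem_univ n)).symm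
    _ = ((cCount G a' n : ℤ) - cCount G a n)
        + ∑ k ∈ univ.erase n, (hfun G a' n k - hfun G a n k) := by
        rw [Finset.sum_sub_distrib, ← cCount_eq, ← cCount_eq]
        congr 1
        refine Finset.sum_congr rfl (fun k hk => ?_)
        rw [e2 k (Finset.mem_erase.1 hk).1, hfun_symm, hfun_symm G a]
    _ = ((cCount G a' n : ℤ) - cCount G a n) + ((cCount G a' n : ℤ) - cCount G a n) := by
        rw [Finset.sum_sub_distrib, diffsum, diffsum]
    _ = 2 * ((cCount G a' n : ℤ) - (cCount G a n : ℤ)) := by ring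
end aux

/-- the game has at least one pure strategy Nash equilibrium. -/
theorem exists_pure_NE {N M : ℕ} (hM : 1 ≤ M)
    (G : SimpleGraph (Fin N)) [DecidableRel G.Adj]
    (sbar : ℝ) (hs : 0 < sbar) :
    ∃ a : Fin N → Fin M, ∀ (n : Fin N) (b : Fin M),
      utility G sbar a n ≥ utility G sbar (Function.update a n b) n := by
  haveI : Nonempty (Fin M) := ⟨⟨0, hM⟩⟩
  obtain ⟨a, -, hmin⟩ := Finset.exists_min_image (Finset.univ : Finset (Fin N → Fin M))
    (fun c => ∑ k, (cCount G c k : ℤ)) ⟨fun _ => Classical.arbitrary _, mem_univ _⟩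
  refine ⟨a, fun n b => ?_⟩
  have hT := hmin (Function.update a n b) (mem_univ _)
  have hd := T_diff G a n b
  have hc : (cCount G a n : ℤ) ≤ (cCount G (Function.update a n b) n : ℤ) := by linarith
  have hcR : (cCount G a n : ℝ) ≤ (cCount G (Function.update a n b) n : ℝ) := by
    exact_mod_cast hc
  unfold utility
  have h1 : (0:ℝ) < 1 + (cCount G a n : ℝ) := by positivity
  exact div_le_div_of_nonneg_left hs.le h1 (by linarith)
end

section
/- For any player n, any channel-selection profile a, and any alternative channel a*_n, the product of the utility change and the potential change resulting from player n unilaterally switching from a_n to a*_n satisfies (u_n(a*_n, a_{−n}) − u_n(a))·(Φ(a*_n, a_{−n}) − Φ(a)) = 2·s̄·(c_n(a) − c_n(a*_n, a_{−n}))² / ((1 + c_n(a*_n, a_{−n}))·(1 + c_n(a))), which is nonnegative. -/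
open Finset

lemma cCount_int {N M : ℕ} (G : SimpleGraph (Fin N)) [DecidableRel G.Adj]
    (a : Fin N → Fin M) (k : Fin N) :
    (cCount G a k : ℤ) = ∑ j : Fin N, (if G.Adj k j ∧ a j = a k then (1:ℤ) else 0) := by
  simp only [cCount, Finset.card_filter, Nat.cast_sum, Nat.cast_ite, Nat.cast_one, Nat.cast_zero]

lemma potential_update {N M : ℕ} (G : SimpleGraph (Fin N)) [DecidableRel G.Adj]
    (a : Fin N → Fin M) (n : Fin N) (aStar : Fin M) :
    (potential G (Function.update a n aStar) : ℤ) - potential G a =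
      -2 * ((cCount G (Function.update a n aStar) n : ℤ) - (cCount G a n : ℤ)) := by
  set a' := Function.update a n aStar with ha'
  have ha'n : a' n = aStar := Function.update_self n aStar a
  have ha'k : ∀ k, k ≠ n → a' k = a k := fun k hk => Function.update_of_ne hk aStar a
  -- c' as a sum not mentioning a'
  have hc' : (cCount G a' n : ℤ) = ∑ j : Fin N, (if G.Adj n j ∧ a j = aStar then (1:ℤ) else 0) := by
    rw [cCount_int]
    apply Finset.sum_congr rfl
    intro j _
    by_cases hj : j = n
    · subst hj; simp [G.irrefl]
    · rw [ha'k j hj, ha'n]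
  have hc : (cCount G a n : ℤ) = ∑ j : Fin N, (if G.Adj n j ∧ a j = a n then (1:ℤ) else 0) := by
    rw [cCount_int]
  -- per-player difference
  have hterm : ∀ k : Fin N, (cCount G a' k : ℤ) - cCount G a k =
      (if k = n then (cCount G a' n : ℤ) - cCount G a n
       else (if G.Adj n k ∧ a k = aStar then (1:ℤ) else 0)
            - (if G.Adj n k ∧ a k = a n then (1:ℤ) else 0)) := by
    intro k
    by_cases hk : k = n
    · simp [hk]
    · rw [if_neg hk, cCount_int, cCount_int, ← Finset.sum_sub_distrib]
      rw [Finset.sum_eq_single n]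
      · rw [ha'k k hk]
        have hadj : G.Adj k n ↔ G.Adj n k := G.adj_comm k n
        by_cases h1 : G.Adj n k <;> simp [hadj, h1, ha'n, eq_comm]
      · intro j _ hj
        rw [ha'k j hj, ha'k k hk]
        ring
      · simp
  have hsum : (∑ k : Fin N, (cCount G a' k : ℤ)) - ∑ k : Fin N, (cCount G a k : ℤ) =
      2 * ((cCount G a' n : ℤ) - cCount G a n) := by
    rw [← Finset.sum_sub_distrib]
    calc ∑ k : Fin N, ((cCount G a' k : ℤ) - cCount G a k)
        = ∑ k : Fin N, (if k = n then (cCount G a' n : ℤ) - cCount G a n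
            else (if G.Adj n k ∧ a k = aStar then (1:ℤ) else 0)
                 - (if G.Adj n k ∧ a k = a n then (1:ℤ) else 0)) :=
          Finset.sum_congr rfl (fun k _ => hterm k)
      _ = ∑ k : Fin N, ((if k = n then ((cCount G a' n : ℤ) - cCount G a n)
              - ((if G.Adj n k ∧ a k = aStar then (1:ℤ) else 0)
                 - (if G.Adj n k ∧ a k = a n then (1:ℤ) else 0)) else 0)
            + ((if G.Adj n k ∧ a k = aStar then (1:ℤ) else 0)
               - (if G.Adj n k ∧ a k = a n then (1:ℤ) else 0))) := by
          apply Finset.sum_congr rfl; intro k _; by_cases hk : k = n <;> simp [hk]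
      _ = 2 * ((cCount G a' n : ℤ) - cCount G a n) := by
          rw [Finset.sum_add_distrib, Finset.sum_ite_eq' Finset.univ n, Finset.sum_sub_distrib,
            ← hc', ← hc]
          simp [G.irrefl]
          ring
  simp only [potential]
  -- (cast)
  linarith [hsum]

/-- product of utility change and potential change from a
unilateral switch, with nonnegativity. -/
theorem utility_potential_product {N M : ℕ} (G : SimpleGraph (Fin N)) [DecidableRel G.Adj]
    (sbar : ℝ) (hs : 0 < sbar) (a : Fin N → Fin M) (n : Fin N) (aStar : Fin M) :
    (utility G sbar (Function.update a n aStar) n - utility G sbar a n) *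
        ((potential G (Function.update a n aStar) : ℝ) - (potential G a : ℝ)) =
      2 * sbar * ((cCount G a n : ℝ) - (cCount G (Function.update a n aStar) n : ℝ)) ^ 2 /
        ((1 + (cCount G (Function.update a n aStar) n : ℝ)) * (1 + (cCount G a n : ℝ))) ∧
    0 ≤ (utility G sbar (Function.update a n aStar) n - utility G sbar a n) *
        ((potential G (Function.update a n aStar) : ℝ) - (potential G a : ℝ)) := by
  have hpot := potential_update G a n aStar
  set c : ℝ := (cCount G a n : ℝ) with hcdef
  set c' : ℝ := (cCount G (Function.update a n aStar) n : ℝ) with hc'def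
  have hpotR : (potential G (Function.update a n aStar) : ℝ) - (potential G a : ℝ) =
      -2 * (c' - c) := by
    have := congrArg (fun z : ℤ => (z : ℝ)) hpot
    push_cast at this
    linarith [this]
  have hc0 : 0 ≤ c := Nat.cast_nonneg _
  have hc'0 : 0 ≤ c' := Nat.cast_nonneg _
  have h1 : (0:ℝ) < 1 + c' := by linarith
  have h2 : (0:ℝ) < 1 + c := by linarith
  constructor
  · rw [hpotR, utility, utility, ← hcdef, ← hc'def]
    field_simp
    ring
  · rw [hpotR, utility, utility, ← hcdef, ← hc'def]
    have : sbar / (1 + c') - sbar / (1 + c) = sbar * (c - c') / ((1 + c') * (1 + c)) := by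
      field_simp; ring
    rw [this]
    have key : sbar * (c - c') / ((1 + c') * (1 + c)) * (-2 * (c' - c)) =
        2 * sbar * (c - c') ^ 2 / ((1 + c') * (1 + c)) := by
      field_simp; ring
    rw [key]
    positivity
end

section
/- For any player n and any fixed channel choices a_{−n} of the other players, the sum of player n's utility over all M possible channel choices is bounded below: ∑_{b=1}^{M} u_n(b, a_{−n}) ≥ s̄·M²/(M + |J_n|). -/
open Finset

/-- the sum of player n's utility over all M channel choices is
at least s̄ M² / (M + |J_n|). -/
theorem sum_utility_lower_bound {N M : ℕ} (G : SimpleGraph (Fin N)) [DecidableRel G.Adj]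
    (sbar : ℝ) (hs : 0 < sbar) (a : Fin N → Fin M) (n : Fin N) :
    ∑ b : Fin M, utility G sbar (Function.update a n b) n ≥
      sbar * (M : ℝ) ^ 2 / ((M : ℝ) + (G.degree n : ℝ)) := by
  set x : Fin M → ℝ := fun b => 1 + (cCount G (Function.update a n b) n : ℝ) with hxdef
  have hxpos : ∀ b : Fin M, 0 < x b := fun b => by positivity
  -- sum of counts equals degree
  have hcount : ∀ b : Fin M, cCount G (Function.update a n b) n
      = ((univ.filter (fun k => G.Adj n k)).filter (fun k => a k = b)).card := by
    intro b
    unfold cCount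
    congr 1
    ext k
    simp only [mem_filter, mem_univ, true_and, filter_filter]
    constructor
    · rintro ⟨h1, h2⟩
      rw [Function.update_of_ne (G.ne_of_adj h1).symm, Function.update_self] at h2
      exact ⟨h1, h2⟩
    · rintro ⟨h1, h2⟩
      rw [Function.update_of_ne (G.ne_of_adj h1).symm, Function.update_self]
      exact ⟨h1, h2⟩
  have hsum_nat : ∑ b : Fin M, cCount G (Function.update a n b) n = G.degree n := by
    simp only [hcount]
    rw [SimpleGraph.degree, SimpleGraph.neighborFinset_eq_filter]
    exact (Finset.card_eq_sum_card_fiberwise (f := a)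
      (s := univ.filter (fun k => G.Adj n k)) (t := univ) (fun k _ => mem_univ (a k))).symm
  have hsumx : ∑ b : Fin M, x b = (M : ℝ) + (G.degree n : ℝ) := by
    rw [hxdef]
    rw [Finset.sum_add_distrib, ← Nat.cast_sum, hsum_nat]
    simp
  -- Cauchy-Schwarz
  have hCS : ((M : ℝ)) ^ 2 ≤ (∑ b : Fin M, x b) * ∑ b : Fin M, (x b)⁻¹ := by
    have h := Finset.sum_mul_sq_le_sq_mul_sq Finset.univ
      (fun b => Real.sqrt (x b)) (fun b => (Real.sqrt (x b))⁻¹)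
    have h1 : ∀ b : Fin M, Real.sqrt (x b) * (Real.sqrt (x b))⁻¹ = 1 := by
      intro b
      rw [mul_inv_cancel₀]
      exact Real.sqrt_ne_zero'.2 (hxpos b)
    have h2 : ∀ b : Fin M, Real.sqrt (x b) ^ 2 = x b := fun b =>
      Real.sq_sqrt (hxpos b).le
    have h3 : ∀ b : Fin M, ((Real.sqrt (x b))⁻¹) ^ 2 = (x b)⁻¹ := by
      intro b
      rw [inv_pow, Real.sq_sqrt (hxpos b).le]
    simp only [h1, h2, h3, Finset.sum_const, Finset.card_univ, Fintype.card_fin,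
      nsmul_eq_mul, mul_one] at h
    exact h
  rw [hsumx] at hCS
  have hden : (0 : ℝ) < (M : ℝ) + (G.degree n : ℝ) := by
    rcases Nat.eq_zero_or_pos M with hM | hM
    · subst hM; exact (Nat.not_lt_zero _ (a n).isLt).elim
    · have : (0:ℝ) < (M:ℝ) := by exact_mod_cast hM
      positivity
  have hLHS : ∑ b : Fin M, utility G sbar (Function.update a n b) n
      = sbar * ∑ b : Fin M, (x b)⁻¹ := by
    rw [Finset.mul_sum]
    refine Finset.sum_congr rfl fun b _ => ?_
    rw [utility, div_eq_mul_inv]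
  rw [hLHS, ge_iff_le, div_le_iff₀ hden]
  calc sbar * (M : ℝ) ^ 2
      ≤ sbar * (((M : ℝ) + (G.degree n : ℝ)) * ∑ b : Fin M, (x b)⁻¹) :=
        mul_le_mul_of_nonneg_left hCS hs.le
    _ = sbar * (∑ b : Fin M, (x b)⁻¹) * ((M : ℝ) + (G.degree n : ℝ)) := by ring
end

section
/- At any pure strategy Nash equilibrium a* of the spectrum access graphical game, the utility of every player n satisfies u_n(a*) ≥ s̄·M/(M + |J_n|). -/
open Finset

/-- at any pure strategy Nash equilibrium, every player's
utility is at least s̄ M / (M + |J_n|). -/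
theorem NE_utility_lower_bound {N M : ℕ} (hM : 1 ≤ M)
    (G : SimpleGraph (Fin N)) [DecidableRel G.Adj]
    (sbar : ℝ) (hs : 0 < sbar) (a : Fin N → Fin M)
    (hNE : ∀ (n : Fin N) (b : Fin M),
      utility G sbar a n ≥ utility G sbar (Function.update a n b) n)
    (n : Fin N) :
    utility G sbar a n ≥ sbar * (M : ℝ) / ((M : ℝ) + (G.degree n : ℝ)) := by
  -- fiber counts
  set f : Fin M → ℕ := fun b => (Finset.univ.filter (fun k => G.Adj n k ∧ a k = b)).card with hf
  have hsum : ∑ b : Fin M, f b = G.degree n := by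
    rw [SimpleGraph.degree, SimpleGraph.neighborFinset_eq_filter]
    rw [Finset.card_eq_sum_card_fiberwise (f := a) (t := Finset.univ) (fun x _ => mem_univ _)]
    refine Finset.sum_congr rfl fun b _ => ?_
    rw [Finset.filter_filter]
  -- pigeonhole: minimizing channel
  have hne : (Finset.univ : Finset (Fin M)).Nonempty := by
    have : 0 < M := hM
    exact ⟨⟨0, this⟩, mem_univ _⟩
  obtain ⟨b, -, hbmin⟩ := Finset.exists_min_image Finset.univ f hne
  have hMfb : M * f b ≤ G.degree n := by
    calc M * f b = ∑ _b : Fin M, f b := by simp [mul_comm]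
    _ ≤ ∑ b' : Fin M, f b' := Finset.sum_le_sum fun b' _ => hbmin b' (mem_univ _)
    _ = G.degree n := hsum
  -- deviation count
  have hdev : cCount G (Function.update a n b) n = f b := by
    unfold cCount
    rw [Function.update_self]
    refine congrArg Finset.card (Finset.filter_congr fun k _ => ?_)
    constructor
    · rintro ⟨h1, h2⟩
      rw [Function.update_of_ne (G.ne_of_adj h1).symm] at h2
      exact ⟨h1, h2⟩
    · rintro ⟨h1, h2⟩
      exact ⟨h1, by rw [Function.update_of_ne (G.ne_of_adj h1).symm]; exact h2⟩
  -- NE gives cCount ≤ f b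
  have hNEb := hNE n b
  rw [utility, utility, hdev] at hNEb
  have hc : (cCount G a n : ℝ) ≤ (f b : ℝ) := by
    have h1 : (0:ℝ) < 1 + (cCount G a n : ℝ) := by positivity
    have h2 : (0:ℝ) < 1 + (f b : ℝ) := by positivity
    rw [ge_iff_le, div_le_div_iff₀ h2 h1] at hNEb
    nlinarith
  -- finish
  rw [utility, ge_iff_le, div_le_div_iff₀ (by positivity) (by positivity)]
  have hM' : (1:ℝ) ≤ (M:ℝ) := by exact_mod_cast hM
  have hMfb' : (M:ℝ) * (f b : ℝ) ≤ (G.degree n : ℝ) := by exact_mod_cast hMfb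
  have key : (M:ℝ) * (cCount G a n : ℝ) ≤ (G.degree n : ℝ) := by nlinarith
  nlinarith [mul_le_mul_of_nonneg_left key hs.le]
end

section
/- For any interference graph topology, the aggregate utility at any pure strategy Nash equilibrium a* of the spectrum access graphical game is bounded below by U(a*) = ∑_{n=1}^N u_n(a*) ≥ ∑_{n=1}^N s̄·M/(M + |J_n|). -/
open Finset

/-- at any pure strategy Nash equilibrium, the aggregate utility
is at least ∑_n s̄ M / (M + |J_n|). -/
theorem NE_aggregate_lower_bound {N M : ℕ} (hM : 1 ≤ M)
    (G : SimpleGraph (Fin N)) [DecidableRel G.Adj]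
    (sbar : ℝ) (hs : 0 < sbar) (a : Fin N → Fin M)
    (hNE : ∀ (n : Fin N) (b : Fin M),
      utility G sbar a n ≥ utility G sbar (Function.update a n b) n) :
    ∑ n : Fin N, utility G sbar a n ≥
      ∑ n : Fin N, sbar * (M : ℝ) / ((M : ℝ) + (G.degree n : ℝ)) := by
  apply Finset.sum_le_sum
  intro n _
  -- Step 1: for every channel b, cCount a n ≤ number of neighbors choosing b
  have hc : ∀ b : Fin M,
      cCount G a n ≤ (Finset.univ.filter (fun k => G.Adj n k ∧ a k = b)).card := by
    intro b
    have hupd : cCount G (Function.update a n b) n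
        = (Finset.univ.filter (fun k => G.Adj n k ∧ a k = b)).card := by
      unfold cCount
      congr 1
      apply Finset.filter_congr
      intro k _
      constructor
      · rintro ⟨hadj, heq⟩
        refine ⟨hadj, ?_⟩
        have hkn : k ≠ n := fun h => G.irrefl (h ▸ hadj)
        rw [Function.update_of_ne hkn, Function.update_self] at heq
        exact heq
      · rintro ⟨hadj, heq⟩
        have hkn : k ≠ n := fun h => G.irrefl (h ▸ hadj)
        exact ⟨hadj, by rw [Function.update_of_ne hkn, Function.update_self, heq]⟩
    have h := hNE n b
    rw [utility, utility, hupd] at h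
    have h1 : (0:ℝ) < 1 + (cCount G a n : ℝ) := by positivity
    have h2 : (0:ℝ) < 1 + ((Finset.univ.filter (fun k => G.Adj n k ∧ a k = b)).card : ℝ) := by
      positivity
    have := (div_le_div_iff₀ h2 h1).mp h
    have hle : (cCount G a n : ℝ) ≤
        ((Finset.univ.filter (fun k => G.Adj n k ∧ a k = b)).card : ℝ) := by
      nlinarith
    exact_mod_cast hle
  -- Step 2: sum over channels equals degree
  have hsum : ∑ b : Fin M,
      (Finset.univ.filter (fun k => G.Adj n k ∧ a k = b)).card = G.degree n := by
    rw [SimpleGraph.degree, SimpleGraph.neighborFinset]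
    rw [Finset.card_eq_sum_card_fiberwise (f := a) (t := Finset.univ)
      (fun x _ => Finset.mem_univ _)]
    apply Finset.sum_congr rfl
    intro b _
    congr 1
    ext k
    simp [SimpleGraph.mem_neighborFinset, and_comm]
  -- Step 3: M * cCount ≤ degree
  have hkey : M * cCount G a n ≤ G.degree n := by
    calc M * cCount G a n = ∑ _b : Fin M, cCount G a n := by
          simp [Finset.sum_const, mul_comm]
      _ ≤ ∑ b : Fin M, (Finset.univ.filter (fun k => G.Adj n k ∧ a k = b)).card :=
          Finset.sum_le_sum (fun b _ => hc b)
      _ = G.degree n := hsum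
  -- Step 4: conclude
  rw [utility]
  have hM' : (0:ℝ) < M := by exact_mod_cast hM
  have hden : (0:ℝ) < (M : ℝ) + (G.degree n : ℝ) := by positivity
  have h1 : (0:ℝ) < 1 + (cCount G a n : ℝ) := by positivity
  rw [div_le_div_iff₀ hden h1]
  have hkeyR : (M : ℝ) * (cCount G a n : ℝ) ≤ (G.degree n : ℝ) := by exact_mod_cast hkey
  nlinarith
end
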